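/- arXiv:2102.04526 — 2 statements merged into one kernel-verified Lean document; each statement's English description precedes it below -/
import Mathlib

section
/- (Theorem B.1) Let ω > 0, let M ∈ ℕ, and let λ₁, …, λ_M ∈ ℂ with Re λ_n < 0 for every n. Suppose the functions ψ_n^{(j)} : ℝ → ℂ (n = 1, …, M, j ≥ 1) are differentiable, each is (2π/ω)-periodic, and they satisfy: (i) for each n there is a constant I_n ∈ ℂ with d/dt ψ_n^{(1)}(t) = λ_n ψ_n^{(1)}(t) + I_n sin(ωt) for all t; and (ii) for each n and each j ≥ 1, d/dt ψ_n^{(j+1)}(t) = λ_n ψ_n^{(j+1)}(t) + sin(ωt) · Q_n^{(j)}(t) for all t, where Q_n^{(j)} is a finite ℂ-linear combination of functions of the form t ↦ ψ_{b₁}^{(a₁)}(t) ⋯ ψ_{b_p}^{(a_p)}(t) with p ≥ 1, indices b₁, …, b_p ∈ {1, …, M}, and positive integers a₁, …, a_p satisfying a₁ + ⋯ + a_p = j. Then for every n and every j ≥ 1, ψ_n^{(j)} is a trigonometric polynomial of degree at most j with base frequency ω. (Under sinusoidal forcing u(t) = ε sin(ωt), the j-th order term of the asymptotic expansion of each steady-state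 isostable coordinate is a Fourier series with fundamental frequency ω and maximum frequency jω.) -/
open Real Complex Finset

/-- `f` is a trigonometric polynomial of degree at most `d` with base frequency `ω`. -/
def IsTrigPoly (ω : ℝ) (d : ℕ) (f : ℝ → ℂ) : Prop :=
  ∃ a b : ℕ → ℂ, ∀ t : ℝ,
    f t = ∑ k ∈ Finset.range (d + 1),
      (a k * Real.sin (k * ω * t) + b k * Real.cos (k * ω * t))

/-- The set of monomials `t ↦ ψ_{b₁}^{(a₁)}(t) ⋯ ψ_{b_p}^{(a_p)}(t)` (with `p ≥ 1`,
positive exponents `aᵢ` summing to `j`) in the isostable expansion functions. -/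
def MonomialSet (M : ℕ) (ψ : Fin M → ℕ → ℝ → ℂ) (j : ℕ) : Set (ℝ → ℂ) :=
  {g : ℝ → ℂ | ∃ (p : ℕ) (b : Fin (p + 1) → Fin M) (a : Fin (p + 1) → ℕ),
    (∀ i, 1 ≤ a i) ∧ (∑ i, a i) = j ∧ g = fun t => ∏ i, ψ (b i) (a i) t}

/-- Trig polys of degree at most `d` form a submodule. -/
noncomputable def TP (ω : ℝ) (d : ℕ) : Submodule ℂ (ℝ → ℂ) where
  carrier := {f | IsTrigPoly ω d f}
  zero_mem' := ⟨0, 0, by simp⟩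
  add_mem' := by
    rintro f g ⟨a, b, hab⟩ ⟨a', b', hab'⟩
    exact ⟨a + a', b + b', fun t => by
      simp only [Pi.add_apply, hab t, hab' t, ← Finset.sum_add_distrib]
      exact Finset.sum_congr rfl fun k _ => by ring⟩
  smul_mem' := by
    rintro c f ⟨a, b, hab⟩
    exact ⟨c • a, c • b, fun t => by
      simp only [Pi.smul_apply, smul_eq_mul, hab t, Finset.mul_sum]
      exact Finset.sum_congr rfl fun k _ => by ring⟩

noncomputable def expω (ω : ℝ) (k : ℤ) : ℝ → ℂ := fun t => Complex.exp ((k * ω * t : ℝ) * Complex.I)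

lemma expω_apply (ω : ℝ) (k : ℤ) (t : ℝ) :
    expω ω k t = (Real.cos (k * ω * t) : ℂ) + (Real.sin (k * ω * t) : ℂ) * Complex.I := by
  rw [expω, Complex.exp_mul_I]
  push_cast
  ring

lemma exp_mem_TP (ω : ℝ) (d : ℕ) (k : ℤ) (hk : k.natAbs ≤ d) : expω ω k ∈ TP ω d := by
  refine ⟨fun i => if i = k.natAbs then (if 0 ≤ k then Complex.I else -Complex.I) else 0,
    fun i => if i = k.natAbs then 1 else 0, fun t => ?_⟩
  have hmem : k.natAbs ∈ Finset.range (d + 1) := Finset.mem_range.mpr (by omega)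
  rw [Finset.sum_congr rfl (fun i _ => show _ = if i = k.natAbs then
      ((if 0 ≤ k then Complex.I else -Complex.I) * Real.sin (i * ω * t)
        + Real.cos (i * ω * t)) else 0 by by_cases hi : i = k.natAbs <;> simp [hi]),
    Finset.sum_ite_eq' (Finset.range (d+1)) k.natAbs, if_pos hmem, expω_apply]
  rcases le_or_gt 0 k with h | h
  · rw [if_pos h]
    have : ((k : ℝ)) = (k.natAbs : ℝ) := by
      rw [Nat.cast_natAbs, _root_.abs_of_nonneg h]
    rw [this]; ring
  · rw [if_neg (not_le.mpr h)]
    have : ((k : ℝ)) = -(k.natAbs : ℝ) := by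
      rw [Nat.cast_natAbs, _root_.abs_of_neg h]
      push_cast
      ring
    rw [this]
    have h1 : -(k.natAbs : ℝ) * ω * t = -((k.natAbs : ℝ) * ω * t) := by ring
    rw [h1, Real.cos_neg, Real.sin_neg]
    push_cast
    ring

lemma trig_mono {ω : ℝ} {d e : ℕ} (hde : d ≤ e) {f : ℝ → ℂ} (hf : IsTrigPoly ω d f) :
    IsTrigPoly ω e f := by
  obtain ⟨a, b, hab⟩ := hf
  refine ⟨fun k => if k < d + 1 then a k else 0, fun k => if k < d + 1 then b k else 0,
    fun t => ?_⟩
  rw [hab t]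
  rw [← Finset.sum_subset (Finset.range_subset_range.mpr (by omega) :
      Finset.range (d+1) ⊆ Finset.range (e+1))]
  · exact Finset.sum_congr rfl fun k hk => by simp [Finset.mem_range.mp hk]
  · intro k _ hk
    have : ¬ k < d + 1 := fun h => hk (Finset.mem_range.mpr h)
    simp [this]

noncomputable def Egen (ω : ℝ) (d : ℕ) : Set (ℝ → ℂ) :=
  {g | ∃ k : ℤ, k.natAbs ≤ d ∧ g = expω ω k}

noncomputable def E (ω : ℝ) (d : ℕ) : Submodule ℂ (ℝ → ℂ) := Submodule.span ℂ (Egen ω d)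

lemma E_le_TP (ω : ℝ) (d : ℕ) : E ω d ≤ TP ω d := by
  rw [E, Submodule.span_le]
  rintro g ⟨k, hk, rfl⟩
  exact exp_mem_TP ω d k hk

lemma sinf_mem_E (ω : ℝ) {d k : ℕ} (hk : k ≤ d) :
    (fun t : ℝ => (Real.sin (k * ω * t) : ℂ)) ∈ E ω d := by
  have h1 : expω ω k ∈ E ω d := Submodule.subset_span ⟨k, by simpa using hk, rfl⟩
  have h2 : expω ω (-k) ∈ E ω d := Submodule.subset_span ⟨-k, by simpa using hk, rfl⟩
  have := Submodule.add_mem _ (Submodule.smul_mem _ (-(Complex.I/2)) h1)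
    (Submodule.smul_mem _ (Complex.I/2) h2)
  convert this using 1
  funext t
  have e1 := expω_apply ω k t
  have e2 := expω_apply ω (-k) t
  simp only [Int.cast_natCast, Int.cast_neg] at e1 e2
  have hneg : -(k:ℝ) * ω * t = -((k:ℝ) * ω * t) := by ring
  rw [hneg, Real.sin_neg, Real.cos_neg] at e2
  simp only [Pi.add_apply, Pi.smul_apply, smul_eq_mul, e1, e2]
  rw [Complex.ofReal_neg]
  linear_combination ((Real.sin ((k:ℝ)*ω*t) : ℝ) : ℂ) * Complex.I_sq

lemma cosf_mem_E (ω : ℝ) {d k : ℕ} (hk : k ≤ d) :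
    (fun t : ℝ => (Real.cos (k * ω * t) : ℂ)) ∈ E ω d := by
  have h1 : expω ω k ∈ E ω d := Submodule.subset_span ⟨k, by simpa using hk, rfl⟩
  have h2 : expω ω (-k) ∈ E ω d := Submodule.subset_span ⟨-k, by simpa using hk, rfl⟩
  have := Submodule.add_mem _ (Submodule.smul_mem _ ((1:ℂ)/2) h1)
    (Submodule.smul_mem _ ((1:ℂ)/2) h2)
  convert this using 1
  funext t
  have e1 := expω_apply ω k t
  have e2 := expω_apply ω (-k) t
  simp only [Int.cast_natCast, Int.cast_neg] at e1 e2
  have hneg : -(k:ℝ) * ω * t = -((k:ℝ) * ω * t) := by ring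
  rw [hneg, Real.sin_neg, Real.cos_neg] at e2
  simp only [Pi.add_apply, Pi.smul_apply, smul_eq_mul, e1, e2]
  rw [Complex.ofReal_neg]
  ring

lemma TP_le_E (ω : ℝ) (d : ℕ) : TP ω d ≤ E ω d := by
  rintro f ⟨a, b, hab⟩
  have : f = ∑ k ∈ Finset.range (d + 1),
      (a k • (fun t : ℝ => (Real.sin (k * ω * t) : ℂ))
        + b k • (fun t : ℝ => (Real.cos (k * ω * t) : ℂ))) := by
    funext t
    rw [hab t]
    simp [Finset.sum_apply]
  rw [this]
  refine Submodule.sum_mem _ fun k hk => ?_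
  have hkd : k ≤ d := Nat.lt_succ_iff.mp (Finset.mem_range.mp hk)
  exact Submodule.add_mem _
    (Submodule.smul_mem _ _ (sinf_mem_E ω hkd))
    (Submodule.smul_mem _ _ (cosf_mem_E ω hkd))

lemma expω_mul (ω : ℝ) (k l : ℤ) : expω ω k * expω ω l = expω ω (k + l) := by
  funext t
  simp only [Pi.mul_apply, expω, ← Complex.exp_add]
  congr 1
  push_cast
  ring

lemma E_mono {ω : ℝ} {d e : ℕ} (h : d ≤ e) : E ω d ≤ E ω e :=
  Submodule.span_mono (fun g ⟨k, hk, hg⟩ => ⟨k, le_trans hk h, hg⟩)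

lemma mul_mem_E {ω : ℝ} {d e : ℕ} {f g : ℝ → ℂ}
    (hf : f ∈ E ω d) (hg : g ∈ E ω e) : f * g ∈ E ω (d + e) := by
  induction hf using Submodule.span_induction with
  | mem f hfm =>
    obtain ⟨k, hk, rfl⟩ := hfm
    induction hg using Submodule.span_induction with
    | mem g hgm =>
      obtain ⟨l, hl, rfl⟩ := hgm
      rw [expω_mul]
      exact Submodule.subset_span ⟨k + l, le_trans (Int.natAbs_add_le k l) (by omega), rfl⟩
    | zero => simpa [mul_zero] using (Submodule.zero_mem (E ω (d + e)))
    | add x y hx hy hx' hy' => simpa [mul_add] using Submodule.add_mem _ hx' hy'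
    | smul c x hx hx' => simpa [mul_smul_comm] using Submodule.smul_mem _ c hx'
  | zero => simpa [zero_mul] using (Submodule.zero_mem (E ω (d + e)))
  | add x y hx hy hx' hy' => simpa [add_mul] using Submodule.add_mem _ hx' hy'
  | smul c x hx hx' => simpa [smul_mul_assoc] using Submodule.smul_mem _ c hx'

lemma one_mem_E (ω : ℝ) (d : ℕ) : (1 : ℝ → ℂ) ∈ E ω d := by
  have : (1 : ℝ → ℂ) = expω ω 0 := by
    funext t; simp [expω]
  rw [this]
  exact Submodule.subset_span ⟨0, by simp, rfl⟩

lemma prod_mem_E {ω : ℝ} {ι : Type*} (s : Finset ι) (F : ι → ℝ → ℂ) (D : ι → ℕ)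
    (h : ∀ i ∈ s, F i ∈ E ω (D i)) : (∏ i ∈ s, F i) ∈ E ω (∑ i ∈ s, D i) := by
  classical
  induction s using Finset.induction with
  | empty => simpa using one_mem_E ω 0
  | insert _ _ hni ih =>
    rename_i i s
    rw [Finset.prod_insert hni, Finset.sum_insert hni]
    exact mul_mem_E (h i (Finset.mem_insert_self i s))
      (ih fun j hj => h j (Finset.mem_insert_of_mem hj))

lemma coeff_ids (lam m : ℂ) (hD : lam^2 + m^2 ≠ 0) (A B : ℂ) :
    ((B*m - A*lam)/(lam^2+m^2)) * m = lam * (-(A*m + B*lam)/(lam^2+m^2)) + B ∧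
    -(-(A*m + B*lam)/(lam^2+m^2)) * m = lam * ((B*m - A*lam)/(lam^2+m^2)) + A := by
  constructor <;> field_simp <;> ring

lemma denom_ne_zero {lam : ℂ} (hlam : lam.re < 0) (r : ℝ) :
    lam^2 + (r:ℂ)^2 ≠ 0 := by
  intro h
  have hfac : (lam - (r:ℂ) * Complex.I) * (lam + (r:ℂ) * Complex.I) = 0 := by
    linear_combination h - (r:ℂ)^2 * Complex.I_sq
  rcases mul_eq_zero.mp hfac with h1 | h1
  · have : lam = (r:ℂ) * Complex.I := by linear_combination h1
    rw [this] at hlam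
    simp [Complex.mul_re] at hlam
  · have : lam = -((r:ℂ) * Complex.I) := by linear_combination h1
    rw [this] at hlam
    simp [Complex.mul_re] at hlam

lemma ode_key (ω : ℝ) (hω : 0 < ω) (lam : ℂ) (hlam : lam.re < 0) (d : ℕ) (f g : ℝ → ℂ)
    (hf : IsTrigPoly ω d f)
    (hper : ∀ t : ℝ, g (t + 2 * Real.pi / ω) = g t)
    (hd : ∀ t : ℝ, HasDerivAt g (lam * g t + f t) t) :
    IsTrigPoly ω d g := by
  obtain ⟨a, b, hab⟩ := hf
  set T : ℝ := 2 * Real.pi / ω with hT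
  have hT0 : 0 < T := by positivity
  -- the particular solution coefficients
  set c : ℕ → ℂ := fun k => (b k * ((k:ℝ)*ω : ℝ) - a k * lam)/(lam^2 + (((k:ℝ)*ω : ℝ):ℂ)^2)
    with hc
  set e : ℕ → ℂ := fun k => -(a k * ((k:ℝ)*ω : ℝ) + b k * lam)/(lam^2 + (((k:ℝ)*ω : ℝ):ℂ)^2)
    with he
  set P : ℝ → ℂ := fun t => ∑ k ∈ Finset.range (d + 1),
    (c k * Real.sin (k * ω * t) + e k * Real.cos (k * ω * t)) with hP
  -- P is a particular solution
  have hPder : ∀ t : ℝ, HasDerivAt P (lam * P t + f t) t := by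
    intro t
    have hterm : ∀ k ∈ Finset.range (d + 1),
        HasDerivAt (fun t : ℝ => c k * Real.sin (k * ω * t) + e k * Real.cos (k * ω * t))
          (c k * ((Real.cos ((k:ℝ)*ω*t) * ((k:ℝ)*ω) : ℝ) : ℂ)
            + e k * ((-Real.sin ((k:ℝ)*ω*t) * ((k:ℝ)*ω) : ℝ) : ℂ)) t := by
      intro k _
      have h0 : HasDerivAt (fun t : ℝ => (k:ℝ)*ω*t) ((k:ℝ)*ω) t := by
        simpa using (hasDerivAt_id t).const_mul ((k:ℝ)*ω)
      have hsin : HasDerivAt (fun t : ℝ => Real.sin ((k:ℝ)*ω*t))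
          (Real.cos ((k:ℝ)*ω*t) * ((k:ℝ)*ω)) t :=
        (Real.hasDerivAt_sin (((k:ℝ)*ω)*t)).comp t h0
      have hcos : HasDerivAt (fun t : ℝ => Real.cos ((k:ℝ)*ω*t))
          (-Real.sin ((k:ℝ)*ω*t) * ((k:ℝ)*ω)) t :=
        (Real.hasDerivAt_cos (((k:ℝ)*ω)*t)).comp t h0
      exact ((hsin.ofReal_comp).const_mul (c k)).add ((hcos.ofReal_comp).const_mul (e k))
    have hsum := HasDerivAt.fun_sum hterm
    refine hsum.congr_deriv (Eq.symm ?_)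
    rw [hab t, hP]
    simp only [Finset.mul_sum, ← Finset.sum_add_distrib]
    refine Finset.sum_congr rfl fun k _ => ?_
    have hDk := denom_ne_zero hlam ((k:ℝ)*ω)
    have h1 : c k * ((((k:ℝ)*ω : ℝ)):ℂ) = lam * e k + b k := by
      simp only [hc, he]
      exact (coeff_ids lam (((k:ℝ)*ω : ℝ):ℂ) hDk (a k) (b k)).1
    have h2 : -(e k) * ((((k:ℝ)*ω : ℝ)):ℂ) = lam * c k + a k := by
      simp only [hc, he]
      exact (coeff_ids lam (((k:ℝ)*ω : ℝ):ℂ) hDk (a k) (b k)).2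
    rw [Complex.ofReal_mul (Real.cos ((k:ℝ)*ω*t)), Complex.ofReal_mul (-Real.sin ((k:ℝ)*ω*t)),
      Complex.ofReal_neg]
    linear_combination (-((Real.cos ((k:ℝ)*ω*t) : ℝ) : ℂ)) * h1 - ((Real.sin ((k:ℝ)*ω*t) : ℝ) : ℂ) * h2
  -- P is T-periodic
  have hPper : ∀ t : ℝ, P (t + T) = P t := by
    intro t
    rw [hP]
    refine Finset.sum_congr rfl fun k _ => ?_
    have harg : (k:ℝ) * ω * (t + T) = (k:ℝ) * ω * t + (k:ℕ) * (2 * Real.pi) := by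
      rw [hT]; field_simp
    rw [harg, Real.sin_add_nat_mul_two_pi, Real.cos_add_nat_mul_two_pi]
  -- the homogeneous part vanishes
  set φ : ℝ → ℂ := fun t => g t - P t with hφ
  have hφder : ∀ t : ℝ, HasDerivAt φ (lam * φ t) t := by
    intro t
    have := (hd t).sub (hPder t)
    refine this.congr_deriv (Eq.symm ?_)
    simp only [hφ]; ring
  set G : ℝ → ℂ := fun t => Complex.exp (-lam * t) * φ t with hG
  have hGder : ∀ t : ℝ, HasDerivAt G 0 t := by
    intro t
    have hinner : HasDerivAt (fun t : ℝ => -lam * (t:ℂ)) (-lam) t := by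
      simpa using (Complex.ofRealCLM.hasDerivAt (x := t)).const_mul (-lam)
    have hexp := hinner.cexp
    have := hexp.mul (hφder t)
    refine this.congr_deriv (Eq.symm ?_)
    ring
  have hconst : ∀ t : ℝ, G t = G 0 := fun t =>
    is_const_of_deriv_eq_zero (fun x => (hGder x).differentiableAt)
      (fun x => (hGder x).deriv) t 0
  have hφT : φ T = φ 0 := by
    show g T - P T = g 0 - P 0
    have h1 : g T = g 0 := by simpa using hper 0
    have h2 : P T = P 0 := by simpa using hPper 0
    rw [h1, h2]
  have hexpne : Complex.exp (-lam * T) ≠ 1 := by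
    intro h
    have habs := congrArg (‖·‖) h
    rw [Complex.norm_exp, norm_one] at habs
    have hre : (-lam * (T:ℂ)).re = -lam.re * T := by
      simp [Complex.mul_re]
    rw [hre] at habs
    rw [show (1:ℝ) = Real.exp 0 from Real.exp_zero.symm] at habs
    have := Real.exp_injective habs
    nlinarith
  have hφ0 : φ 0 = 0 := by
    have h1 := hconst T
    simp only [hG] at h1
    rw [hφT] at h1
    have h2 : (Complex.exp (-lam * T) - 1) * φ 0 = 0 := by
      rw [sub_mul, one_mul, h1]
      simp
    rcases mul_eq_zero.mp h2 with h3 | h3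
    · exact absurd (by linear_combination h3 : Complex.exp (-lam*T) = 1) hexpne
    · exact h3
  have hφeq : ∀ t : ℝ, φ t = 0 := by
    intro t
    have h1 := hconst t
    simp only [hG] at h1
    simp only [Complex.ofReal_zero, mul_zero, Complex.exp_zero, one_mul, hφ0, mul_zero] at h1
    exact (mul_eq_zero.mp h1).resolve_left (Complex.exp_ne_zero _)
  refine ⟨c, e, fun t => ?_⟩
  have hgt : g t = P t := sub_eq_zero.mp (hφeq t)
  rw [hgt]

/-- Theorem B.1: each term `ψ_n^{(j)}` of the asymptotic expansion of the steady-state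
isostable coordinates under sinusoidal forcing is a trigonometric polynomial of degree
at most `j` with base frequency `ω`. -/
theorem isostable_expansion_trigPoly
    (ω : ℝ) (hω : 0 < ω) (M : ℕ) (lam : Fin M → ℂ)
    (hlam : ∀ n, (lam n).re < 0)
    (ψ : Fin M → ℕ → ℝ → ℂ)
    (hper : ∀ n j, 1 ≤ j → ∀ t : ℝ, ψ n j (t + 2 * Real.pi / ω) = ψ n j t)
    (hfirst : ∀ n, ∃ I : ℂ, ∀ t : ℝ,
      HasDerivAt (ψ n 1) (lam n * ψ n 1 t + I * Real.sin (ω * t)) t)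
    (hrec : ∀ n j, 1 ≤ j →
      ∃ Q ∈ Submodule.span ℂ (MonomialSet M ψ j), ∀ t : ℝ,
        HasDerivAt (ψ n (j + 1))
          (lam n * ψ n (j + 1) t + (Real.sin (ω * t) : ℂ) * Q t) t) :
    ∀ n j, 1 ≤ j → IsTrigPoly ω j (ψ n j) := by

  have key : ∀ j, ∀ n : Fin M, 1 ≤ j → IsTrigPoly ω j (ψ n j) := by
    intro j
    induction j using Nat.strong_induction_on with
    | _ j IH =>
      intro n hj
      rcases j with _ | j0
      · omega
      rcases j0 with _ | m
      · -- j = 1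
        obtain ⟨I, hI⟩ := hfirst n
        refine ode_key ω hω (lam n) (hlam n) 1 (fun t => I * Real.sin (ω * t)) (ψ n 1)
          ⟨fun k => if k = 1 then I else 0, 0, fun t => ?_⟩ (hper n 1 le_rfl) hI
        norm_num [Finset.sum_range_succ]
      · -- j = m + 2
        obtain ⟨Q, hQ, hder⟩ := hrec n (m + 1) (by omega)
        have hQE : Q ∈ E ω (m + 1) := by
          refine Submodule.span_le.mpr ?_ hQ
          rintro g ⟨p, bb, aa, hpos, hsum, rfl⟩
          have hfun : (fun t => ∏ i, ψ (bb i) (aa i) t)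
              = ∏ i : Fin (p + 1), ψ (bb i) (aa i) := by
            funext t; simp [Finset.prod_apply]
          rw [hfun, show m + 1 = ∑ i : Fin (p+1), aa i from hsum.symm]
          refine prod_mem_E Finset.univ _ aa fun i _ => ?_
          have hle : aa i ≤ m + 1 := by
            rw [← hsum]
            exact Finset.single_le_sum (fun j _ => Nat.zero_le (aa j)) (Finset.mem_univ i)
          exact TP_le_E ω (aa i) (IH (aa i) (by omega) (bb i) (hpos i))
        have hsin1 : (fun t : ℝ => (Real.sin (ω * t) : ℂ)) ∈ E ω 1 := by
          have h := sinf_mem_E (d := 1) (k := 1) ω le_rfl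
          have : (fun t : ℝ => (Real.sin (((1:ℕ):ℝ) * ω * t) : ℂ))
              = fun t : ℝ => (Real.sin (ω * t) : ℂ) := by norm_num
          rwa [this] at h
        have hmul := mul_mem_E hsin1 hQE
        rw [show 1 + (m + 1) = m + 2 by omega] at hmul
        have hfT : IsTrigPoly ω (m + 2) (fun t => (Real.sin (ω * t) : ℂ) * Q t) :=
          E_le_TP ω (m + 2) hmul
        exact ode_key ω hω (lam n) (hlam n) (m + 2) _ (ψ n (m + 2)) hfT
          (hper n (m + 2) (by omega)) hder
  exact fun n j hj => key j n hj
end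

section
/- Let K, M, N ∈ ℕ, let P be a K × M complex matrix whose columns are linearly independent (equivalently, P*P is invertible, where P* denotes the conjugate transpose), let Φ be a K × N complex matrix with Φ*Φ = I_N, and suppose Φ Φ* P = P (every column of P lies in the column span of Φ). Let Λ be an M × M complex matrix, define P† = (P*P)⁻¹ P*, and set A_μ = Φ* P Λ P† Φ (an N × N matrix). Then for every eigenvalue λ of Λ with eigenvector v (Λ v = λ v, v ≠ 0), the vector Φ* P v is nonzero and satisfies A_μ (Φ* P v) = λ (Φ* P v); hence every eigenvalue of Λ is an eigenvalue of A_μ. (The data matrix A_μ constructed from POD coefficients shares the eigenvalues of the isostable decay matrix Λ, allowing the linearized eigenvalues to be estimated from data.) -/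
open Matrix

theorem data_matrix_shares_eigenvalues
    (K M N : ℕ)
    (P : Matrix (Fin K) (Fin M) ℂ)
    (hP : IsUnit (Pᴴ * P))
    (Φ : Matrix (Fin K) (Fin N) ℂ)
    (hΦ : Φᴴ * Φ = 1)
    (hspan : Φ * Φᴴ * P = P)
    (Λ : Matrix (Fin M) (Fin M) ℂ) :
    ∀ (lam : ℂ) (v : Fin M → ℂ), v ≠ 0 → Λ *ᵥ v = lam • v →
      (Φᴴ * P) *ᵥ v ≠ 0 ∧
        (Φᴴ * P * Λ * ((Pᴴ * P)⁻¹ * Pᴴ) * Φ) *ᵥ ((Φᴴ * P) *ᵥ v) =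
          lam • ((Φᴴ * P) *ᵥ v) := by
  intro lam v hv hev
  have hinv : (Pᴴ * P)⁻¹ * (Pᴴ * P) = 1 :=
    Matrix.nonsing_inv_mul _ ((Matrix.isUnit_iff_isUnit_det _).mp hP)
  have key : Φᴴ * P * Λ * ((Pᴴ * P)⁻¹ * Pᴴ) * Φ * (Φᴴ * P) = Φᴴ * P * Λ := by
    calc Φᴴ * P * Λ * ((Pᴴ * P)⁻¹ * Pᴴ) * Φ * (Φᴴ * P)
        = Φᴴ * P * Λ * ((Pᴴ * P)⁻¹ * (Pᴴ * (Φ * Φᴴ * P))) := by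
          simp only [Matrix.mul_assoc]
      _ = Φᴴ * P * Λ * ((Pᴴ * P)⁻¹ * (Pᴴ * P)) := by rw [hspan]
      _ = Φᴴ * P * Λ := by rw [hinv, Matrix.mul_one]
  constructor
  · intro h
    have hPv : P *ᵥ v = 0 := by
      have : (Φ * (Φᴴ * P)) *ᵥ v = 0 := by
        rw [← Matrix.mulVec_mulVec, h, Matrix.mulVec_zero]
      rwa [← Matrix.mul_assoc, hspan] at this
    have h1 : (Pᴴ * P) *ᵥ v = 0 := by
      rw [← Matrix.mulVec_mulVec, hPv, Matrix.mulVec_zero]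
    have : ((Pᴴ * P)⁻¹ * (Pᴴ * P)) *ᵥ v = 0 := by
      rw [← Matrix.mulVec_mulVec, h1, Matrix.mulVec_zero]
    rw [hinv, Matrix.one_mulVec] at this
    exact hv this
  · rw [Matrix.mulVec_mulVec, key, ← Matrix.mulVec_mulVec, hev, Matrix.mulVec_smul]
end
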